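/- Let L : ℝ^d → ℝ be a differentiable β-smooth function, let w_t ∈ ℝ^d be the current iterate, let w_{t+1/2} be a random point in ℝ^d (the perturbed iterate), and let G be a random vector in ℝ^d (the mini-batch stochastic gradient at w_{t+1/2}) satisfying the conditional unbiasedness and variance bounds 𝔼[G | w_{t+1/2}] = ∇L(w_{t+1/2}) and 𝔼[‖G − ∇L(w_{t+1/2})‖² | w_{t+1/2}] ≤ σ²/b. Let w_{t+1} = w_t − ηG with η > 0. Then 𝔼[L(w_{t+1})] ≤ 𝔼[L(w_t)] − η·𝔼[⟨∇L(w_{t+1/2}), ∇L(w_t)⟩] + η²β·σ²/b + η²β·𝔼[‖∇L(w_{t+1/2})‖²]. -/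

import Mathlib

open MeasureTheory
open scoped RealInnerProductSpace

/-!
Along the segment from `x` to `y` the gradient of a `β`-smooth `f` moves by at most
`β t ‖y - x‖`, which gives the descent lemma
`f y ≤ f x + ⟪∇f x, y - x⟫ + β/2 ‖y - x‖²`. Apply it at `x = w_t`, `y = w_t - ηG` and take
expectations. Conditioning on `w_{t+1/2}` replaces `𝔼 G` by `𝔼 ∇L(w_{t+1/2})`, and
`‖G‖² ≤ 2‖G - ∇L(w_{t+1/2})‖² + 2‖∇L(w_{t+1/2})‖²` bounds the second moment: the first term has
expectation at most `σ²/b` by the conditional variance bound.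
-/

section

variable {Ω : Type*} {m m₀ : MeasurableSpace Ω} {μ : Measure[m₀] Ω}

theorem integral_le_of_ae_condExp_le [IsProbabilityMeasure μ] (hm : m ≤ m₀) {f : Ω → ℝ} {c : ℝ}
    (hf : ∀ᵐ ω ∂μ, μ[f | m] ω ≤ c) : ∫ ω, f ω ∂μ ≤ c := by
  rw [← integral_condExp hm]
  simpa using integral_mono_ae integrable_condExp (integrable_const c) hf

variable {E : Type*} [NormedAddCommGroup E]

theorem integral_norm_sq_le_two_mul_add {G g : Ω → E}
    (hGg : Integrable (fun ω => ‖G ω - g ω‖ ^ 2) μ) (hg : Integrable (fun ω => ‖g ω‖ ^ 2) μ)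
    (hG : Integrable (fun ω => ‖G ω‖ ^ 2) μ) :
    ∫ ω, ‖G ω‖ ^ 2 ∂μ ≤ 2 * ∫ ω, ‖G ω - g ω‖ ^ 2 ∂μ + 2 * ∫ ω, ‖g ω‖ ^ 2 ∂μ := by
  rw [← integral_const_mul, ← integral_const_mul,
    ← integral_add (hGg.const_mul 2) (hg.const_mul 2)]
  refine integral_mono hG ((hGg.const_mul 2).add (hg.const_mul 2)) fun ω => ?_
  calc ‖G ω‖ ^ 2 = ‖(G ω - g ω) + g ω‖ ^ 2 := by rw [sub_add_cancel]
    _ ≤ (‖G ω - g ω‖ + ‖g ω‖) ^ 2 := by gcongr; exact norm_add_le _ _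
    _ ≤ 2 * ‖G ω - g ω‖ ^ 2 + 2 * ‖g ω‖ ^ 2 := by
        linarith [add_sq_le (a := ‖G ω - g ω‖) (b := ‖g ω‖)]

variable [InnerProductSpace ℝ E] [CompleteSpace E]

theorem le_add_inner_gradient_add_half_mul_norm_sq {f : E → ℝ} {β : ℝ}
    (hf : Differentiable ℝ f) (hsmooth : ∀ u v, ‖gradient f u - gradient f v‖ ≤ β * ‖u - v‖)
    (x y : E) : f y ≤ f x + ⟪gradient f x, y - x⟫ + β / 2 * ‖y - x‖ ^ 2 := by
  set v := y - x
  let φ : ℝ → ℝ := fun t => f (x + t • v) - t * ⟪gradient f x, v⟫ - β / 2 * t ^ 2 * ‖v‖ ^ 2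
  have hφ : ∀ t, HasDerivAt φ
      (⟪gradient f (x + t • v) - gradient f x, v⟫ - β * t * ‖v‖ ^ 2) t := by
    intro t
    have hline : HasDerivAt (fun t : ℝ => x + t • v) v t := by
      simpa using ((hasDerivAt_id t).smul_const v).const_add x
    have := (((hf _).hasGradientAt.hasFDerivAt.comp_hasDerivAt t hline).sub
      ((hasDerivAt_id t).mul_const ⟪gradient f x, v⟫)).sub
      (((hasDerivAt_pow 2 t).const_mul (β / 2)).mul_const (‖v‖ ^ 2))
    refine this.congr_deriv ?_
    rw [inner_sub_left, InnerProductSpace.toDual_apply_apply]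
    push_cast
    ring
  have hφ_nonpos : ∀ t ∈ Set.Ioi (0 : ℝ),
      ⟪gradient f (x + t • v) - gradient f x, v⟫ - β * t * ‖v‖ ^ 2 ≤ 0 := by
    intro t (ht : 0 < t)
    have := calc ⟪gradient f (x + t • v) - gradient f x, v⟫
        ≤ ‖gradient f (x + t • v) - gradient f x‖ * ‖v‖ := real_inner_le_norm _ _
      _ ≤ β * ‖t • v‖ * ‖v‖ := by
          gcongr
          simpa using hsmooth (x + t • v) x
      _ = β * t * ‖v‖ ^ 2 := by rw [norm_smul, Real.norm_of_nonneg ht.le]; ring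
    linarith
  have hanti : AntitoneOn φ (Set.Ici 0) :=
    antitoneOn_of_hasDerivWithinAt_nonpos (convex_Ici 0)
      (fun t _ => (hφ t).continuousAt.continuousWithinAt)
      (fun t _ => (hφ t).hasDerivWithinAt) (by simpa using hφ_nonpos)
  have h01 := hanti Set.self_mem_Ici (Set.mem_Ici.2 zero_le_one) zero_le_one
  simp only [φ, v, zero_smul, add_zero, zero_mul, sub_zero, one_smul, one_mul, add_sub_cancel,
    one_pow, ne_eq, OfNat.ofNat_ne_zero, not_false_eq_true, zero_pow, mul_zero] at h01
  linarith

theorem integral_comp_sub_smul_le [IsProbabilityMeasure μ] {f : E → ℝ} {β : ℝ}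
    (hf : Differentiable ℝ f) (hsmooth : ∀ u v, ‖gradient f u - gradient f v‖ ≤ β * ‖u - v‖)
    (w : E) (η : ℝ) {G : Ω → E} (hG : Integrable G μ)
    (hG_sq : Integrable (fun ω => ‖G ω‖ ^ 2) μ) (hfG : Integrable (fun ω => f (w - η • G ω)) μ) :
    ∫ ω, f (w - η • G ω) ∂μ ≤
      f w - η * ⟪gradient f w, ∫ ω, G ω ∂μ⟫ + β / 2 * η ^ 2 * ∫ ω, ‖G ω‖ ^ 2 ∂μ := by
  have hinner : Integrable (fun ω => η * ⟪gradient f w, G ω⟫) μ :=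
    (hG.const_inner _).const_mul η
  have hlin : Integrable (fun ω => f w - η * ⟪gradient f w, G ω⟫) μ :=
    (integrable_const _).sub hinner
  have hsq : Integrable (fun ω => β / 2 * η ^ 2 * ‖G ω‖ ^ 2) μ := hG_sq.const_mul _
  calc ∫ ω, f (w - η • G ω) ∂μ
      ≤ ∫ ω, (f w - η * ⟪gradient f w, G ω⟫ + β / 2 * η ^ 2 * ‖G ω‖ ^ 2) ∂μ := by
        refine integral_mono hfG (hlin.add hsq) fun ω => ?_
        have h := le_add_inner_gradient_add_half_mul_norm_sq hf hsmooth w (w - η • G ω)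
        rw [sub_sub_cancel_left, inner_neg_right, real_inner_smul_right, norm_neg, norm_smul,
          Real.norm_eq_abs, mul_pow, sq_abs] at h
        linarith
    _ = f w - η * ⟪gradient f w, ∫ ω, G ω ∂μ⟫ + β / 2 * η ^ 2 * ∫ ω, ‖G ω‖ ^ 2 ∂μ := by
        rw [integral_add hlin hsq, integral_sub (integrable_const _) hinner, integral_const_mul,
          integral_const_mul, integral_inner hG, integral_const]
        simp

end

theorem sam_descent_step_inequality_general
    {d : ℕ} {Ω : Type*} [MeasurableSpace Ω] (μ : Measure Ω) [IsProbabilityMeasure μ]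
    (β η σ : ℝ) (b : ℕ) (hβ : 0 ≤ β)
    (L : EuclideanSpace ℝ (Fin d) → ℝ) (hL : Differentiable ℝ L)
    (hsmooth : ∀ u v : EuclideanSpace ℝ (Fin d),
      ‖gradient L u - gradient L v‖ ≤ β * ‖u - v‖)
    (wt : EuclideanSpace ℝ (Fin d))
    (Wmid G : Ω → EuclideanSpace ℝ (Fin d))
    (hWmid_meas : Measurable Wmid)
    -- conditionally on `Wmid`, `G` is an unbiased estimate of `∇L(Wmid)`
    (hG_mean : μ[G | MeasurableSpace.comap Wmid inferInstance] =ᵐ[μ]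
      fun ω => gradient L (Wmid ω))
    -- with conditional variance bounded by `σ²/b`
    (hG_var : ∀ᵐ ω ∂μ,
      (μ[(fun ω => ‖G ω - gradient L (Wmid ω)‖ ^ 2) |
          MeasurableSpace.comap Wmid inferInstance]) ω ≤ σ ^ 2 / b)
    -- integrability of the quantities appearing in the statement
    (hG_int : Integrable G μ)
    (hG_var_int : Integrable (fun ω => ‖G ω - gradient L (Wmid ω)‖ ^ 2) μ)
    (hG_sq_int : Integrable (fun ω => ‖G ω‖ ^ 2) μ)
    (hL_int : Integrable (fun ω => L (wt - η • G ω)) μ)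
    (hgradmid_sq_int : Integrable (fun ω => ‖gradient L (Wmid ω)‖ ^ 2) μ) :
    ∫ ω, L (wt - η • G ω) ∂μ ≤
      L wt - η * ∫ ω, ⟪gradient L (Wmid ω), gradient L wt⟫ ∂μ +
        η ^ 2 * β * σ ^ 2 / b + η ^ 2 * β * ∫ ω, ‖gradient L (Wmid ω)‖ ^ 2 ∂μ := by
  have hm := hWmid_meas.comap_le
  have hmean : ⟪gradient L wt, ∫ ω, G ω ∂μ⟫ =
      ∫ ω, ⟪gradient L (Wmid ω), gradient L wt⟫ ∂μ := by
    rw [← integral_condExp hm, integral_congr_ae hG_mean,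
      ← integral_inner (integrable_condExp.congr hG_mean)]
    simp_rw [real_inner_comm]
  have hvar := integral_le_of_ae_condExp_le hm hG_var
  have hsecond := integral_norm_sq_le_two_mul_add hG_var_int hgradmid_sq_int hG_sq_int
  calc ∫ ω, L (wt - η • G ω) ∂μ
      ≤ L wt - η * ⟪gradient L wt, ∫ ω, G ω ∂μ⟫ + β / 2 * η ^ 2 * ∫ ω, ‖G ω‖ ^ 2 ∂μ :=
        integral_comp_sub_smul_le hL hsmooth wt η hG_int hG_sq_int hL_int
    _ ≤ L wt - η * ⟪gradient L wt, ∫ ω, G ω ∂μ⟫ +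
          β / 2 * η ^ 2 * (2 * (σ ^ 2 / b) + 2 * ∫ ω, ‖gradient L (Wmid ω)‖ ^ 2 ∂μ) := by
        gcongr
        linarith
    _ = _ := by rw [hmean]; ring

/-- The descent-step inequality from smoothness and Jensen's inequality (proof of Lemma 4):
for a differentiable `β`-smooth `L`, the current iterate `wt`, a random perturbed point
`Wmid`, and a random vector `G` with `𝔼[G | Wmid] = ∇L(Wmid)` and
`𝔼[‖G − ∇L(Wmid)‖² | Wmid] ≤ σ²/b`, the update `w_{t+1} = wt − ηG` with `η > 0` satisfies
`𝔼[L(w_{t+1})] ≤ 𝔼[L(wt)] − η𝔼⟨∇L(Wmid), ∇L(wt)⟩ + η²βσ²/b + η²β𝔼‖∇L(Wmid)‖²`. -/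
theorem sam_descent_step_inequality
    {d : ℕ} {Ω : Type*} [MeasurableSpace Ω] (μ : Measure Ω) [IsProbabilityMeasure μ]
    (β η σ : ℝ) (b : ℕ) (hb : 0 < b) (hβ : 0 ≤ β) (hη : 0 < η)
    (L : EuclideanSpace ℝ (Fin d) → ℝ) (hL : Differentiable ℝ L)
    (hsmooth : ∀ u v : EuclideanSpace ℝ (Fin d),
      ‖gradient L u - gradient L v‖ ≤ β * ‖u - v‖)
    (wt : EuclideanSpace ℝ (Fin d))
    (Wmid G : Ω → EuclideanSpace ℝ (Fin d))
    (hWmid_meas : Measurable Wmid) (hG_meas : Measurable G)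
    -- conditionally on `Wmid`, `G` is an unbiased estimate of `∇L(Wmid)`
    (hG_mean : μ[G | MeasurableSpace.comap Wmid inferInstance] =ᵐ[μ]
      fun ω => gradient L (Wmid ω))
    -- with conditional variance bounded by `σ²/b`
    (hG_var : ∀ᵐ ω ∂μ,
      (μ[(fun ω => ‖G ω - gradient L (Wmid ω)‖ ^ 2) |
          MeasurableSpace.comap Wmid inferInstance]) ω ≤ σ ^ 2 / b)
    -- integrability of the quantities appearing in the statement
    (hG_int : Integrable G μ)
    (hG_var_int : Integrable (fun ω => ‖G ω - gradient L (Wmid ω)‖ ^ 2) μ)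
    (hG_sq_int : Integrable (fun ω => ‖G ω‖ ^ 2) μ)
    (hL_int : Integrable (fun ω => L (wt - η • G ω)) μ)
    (hgradmid_sq_int : Integrable (fun ω => ‖gradient L (Wmid ω)‖ ^ 2) μ)
    (hinner_int : Integrable (fun ω => ⟪gradient L (Wmid ω), gradient L wt⟫) μ) :
    ∫ ω, L (wt - η • G ω) ∂μ ≤
      L wt - η * ∫ ω, ⟪gradient L (Wmid ω), gradient L wt⟫ ∂μ +
        η ^ 2 * β * σ ^ 2 / b + η ^ 2 * β * ∫ ω, ‖gradient L (Wmid ω)‖ ^ 2 ∂μ :=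
  sam_descent_step_inequality_general μ β η σ b hβ L hL hsmooth wt Wmid G hWmid_meas hG_mean hG_var
    hG_int hG_var_int hG_sq_int hL_int hgradmid_sq_int
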